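/- Let $z, a \in \mathbb{B}_n$ and let $\gamma:[0,1]\to\mathbb{B}_n$ be the geodesic in the Bergman metric from $z$ to $a$. Then for every point $u = \gamma(t)$ on this geodesic, $|1 - \langle a, u\rangle| \le 2|1-\langle a, z\rangle|$. -/

import Mathlib

open MeasureTheory Complex
open scoped ENNReal Real

noncomputable section

/-- Borel σ-algebra on `EuclideanSpace ℂ (Fin n)`. -/
instance (n : ℕ) : MeasurableSpace (EuclideanSpace ℂ (Fin n)) := borel _
instance (n : ℕ) : BorelSpace (EuclideanSpace ℂ (Fin n)) := ⟨rfl⟩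

/-- Lebesgue measure on `EuclideanSpace ℂ (Fin n)`, obtained from the product
Lebesgue measure on `Fin n → ℂ`. -/
instance (n : ℕ) : MeasureSpace (EuclideanSpace ℂ (Fin n)) :=
  ⟨Measure.map (WithLp.equiv 2 (Fin n → ℂ)).symm volume⟩

variable (n : ℕ)

/-- The open unit ball `𝔹_n` of `ℂ^n`. -/
def Ball : Set (EuclideanSpace ℂ (Fin n)) := Metric.ball 0 1

/-- The Hermitian inner product `⟨z,w⟩ = ∑ z_j * conj (w_j)` (holomorphic in the
first variable, as used in the paper). -/
def hip (z w : EuclideanSpace ℂ (Fin n)) : ℂ := inner ℂ w z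

/-- Normalized Lebesgue volume measure `dv` on the unit ball (total mass one). -/
def nuV : Measure (EuclideanSpace ℂ (Fin n)) :=
  (volume (Ball n))⁻¹ • volume.restrict (Ball n)

/-- The weighted measure `dv_α = c_α (1-|z|^2)^α dv`, normalized to have mass one. -/
def nuA (α : ℝ) : Measure (EuclideanSpace ℂ (Fin n)) :=
  (((nuV n).withDensity fun z => ENNReal.ofReal ((1 - ‖z‖ ^ 2) ^ α)) Set.univ)⁻¹ •
    ((nuV n).withDensity fun z => ENNReal.ofReal ((1 - ‖z‖ ^ 2) ^ α))

/-- The Möbius-invariant measure `dλ_n = (1-|z|^2)^{-(n+1)} dv`. -/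
def lamN : Measure (EuclideanSpace ℂ (Fin n)) :=
  (nuV n).withDensity fun z => ENNReal.ofReal ((1 - ‖z‖ ^ 2) ^ (-(n + 1 : ℝ)))

open scoped Classical in
/-- Orthogonal projection of `w` onto the complex line `ℂ z`. -/
def projLine (z w : EuclideanSpace ℂ (Fin n)) : EuclideanSpace ℂ (Fin n) :=
  if z = 0 then 0 else (hip n w z / hip n z z) • z

/-- The Möbius automorphism `φ_z` of the unit ball interchanging `0` and `z`. -/
def mobius (z w : EuclideanSpace ℂ (Fin n)) : EuclideanSpace ℂ (Fin n) :=
  ((1 : ℂ) - hip n w z)⁻¹ •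
    (z - projLine n z w - (Real.sqrt (1 - ‖z‖ ^ 2) : ℂ) • (w - projLine n z w))

/-- The Bergman (hyperbolic) distance on the unit ball. -/
def bdist (z w : EuclideanSpace ℂ (Fin n)) : ℝ :=
  (1 / 2) * Real.log ((1 + ‖mobius n z w‖) / (1 - ‖mobius n z w‖))

/-- The Bergman metric ball `D(z,r)`. -/
def Dball (z : EuclideanSpace ℂ (Fin n)) (r : ℝ) : Set (EuclideanSpace ℂ (Fin n)) :=
  {w | w ∈ Ball n ∧ bdist n z w < r}

/-- The average `f̂_r(z)` of `f` over `D(z,r)` with respect to `dv_α`. -/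
def favg (α r : ℝ) (f : EuclideanSpace ℂ (Fin n) → ℂ) (z : EuclideanSpace ℂ (Fin n)) : ℂ :=
  ((nuA n α (Dball n z r)).toReal)⁻¹ • ∫ w in Dball n z r, f w ∂nuA n α

/-- The local mean oscillation `MO_r(f)(z)` in the Bergman metric. -/
def MO (α r : ℝ) (f : EuclideanSpace ℂ (Fin n) → ℂ) (z : EuclideanSpace ℂ (Fin n)) : ℝ :=
  Real.sqrt (((nuA n α (Dball n z r)).toReal)⁻¹ *
    ∫ w in Dball n z r, ‖f w - favg n α r f z‖ ^ 2 ∂nuA n α)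

/-- The kernel `K^t_z(w) = (1 - ⟨w,z⟩)^{-(n+1+α+t)}`. -/
def Kt (α t : ℝ) (z w : EuclideanSpace ℂ (Fin n)) : ℂ :=
  ((1 : ℂ) - hip n w z) ^ (-(((n : ℝ) + 1 + α + t) : ℂ))

/-- The norm `‖K^t_z‖_α` in `L^2(dv_α)`. -/
def KtNorm (α t : ℝ) (z : EuclideanSpace ℂ (Fin n)) : ℝ :=
  Real.sqrt (∫ w, ‖Kt n α t z w‖ ^ 2 ∂nuA n α)

/-- The normalized kernel `h^t_z = K^t_z / ‖K^t_z‖_α`. -/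
def ht (α t : ℝ) (z w : EuclideanSpace ℂ (Fin n)) : ℂ :=
  (KtNorm n α t z : ℂ)⁻¹ * Kt n α t z w

/-- The Berezin-type transform `B_{α,t}(g)(z) = ∫ g |h^t_z|^2 dv_α` (complex valued). -/
def berezin (α t : ℝ) (g : EuclideanSpace ℂ (Fin n) → ℂ) (z : EuclideanSpace ℂ (Fin n)) : ℂ :=
  ∫ w, g w * ((‖ht n α t z w‖ ^ 2 : ℝ) : ℂ) ∂nuA n α

/-- The Berezin-type transform of a real-valued function. -/
def berezinR (α t : ℝ) (g : EuclideanSpace ℂ (Fin n) → ℝ) (z : EuclideanSpace ℂ (Fin n)) : ℝ :=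
  ∫ w, g w * ‖ht n α t z w‖ ^ 2 ∂nuA n α

/-- The mean oscillation function `MO_{α,t}(f)(z)`. -/
def MOt (α t : ℝ) (f : EuclideanSpace ℂ (Fin n) → ℂ) (z : EuclideanSpace ℂ (Fin n)) : ℝ :=
  Real.sqrt (berezinR n α t (fun w => ‖f w‖ ^ 2) z - ‖berezin n α t f z‖ ^ 2)

/-- The Bergman projection `P_γ` at the level of functions. -/
def Pproj (γ : ℝ) (f : EuclideanSpace ℂ (Fin n) → ℂ) (z : EuclideanSpace ℂ (Fin n)) : ℂ :=
  ∫ w, f w / ((1 : ℂ) - hip n z w) ^ ((((n : ℝ) + 1 + γ) : ℂ)) ∂nuA n γ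

/-- The Hankel "operator" `H^γ_f g = (I - P_γ)(f g)` at the level of functions. -/
def hankelFun (γ : ℝ) (f g : EuclideanSpace ℂ (Fin n) → ℂ) :
    EuclideanSpace ℂ (Fin n) → ℂ :=
  fun z => f z * g z - Pproj n γ (fun w => f w * g w) z

/-- The `L^2(dv_α)` norm of a function. -/
def l2norm (α : ℝ) (g : EuclideanSpace ℂ (Fin n) → ℂ) : ℝ :=
  Real.sqrt (∫ w, ‖g w‖ ^ 2 ∂nuA n α)

/-- `f` is locally square integrable on the ball: square-integrable with respect to
`dv_α` on every Bergman metric ball. -/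
def LocL2 (α : ℝ) (f : EuclideanSpace ℂ (Fin n) → ℂ) : Prop :=
  ∀ z r, IntegrableOn f (Dball n z r) (nuA n α) ∧
    IntegrableOn (fun w => ‖f w‖ ^ 2) (Dball n z r) (nuA n α)

/-- A sequence is separated in the Bergman metric. -/
def Separated (a : ℕ → EuclideanSpace ℂ (Fin n)) : Prop :=
  (∀ k, a k ∈ Ball n) ∧ ∃ δ > 0, ∀ i j, i ≠ j → bdist n (a i) (a j) > δ

/-- An `r`-lattice in the Bergman metric. -/
def IsLattice (r : ℝ) (a : ℕ → EuclideanSpace ℂ (Fin n)) : Prop :=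
  (∀ k, a k ∈ Ball n) ∧ (Ball n ⊆ ⋃ k, Dball n (a k) r) ∧
    (Pairwise fun i j => Disjoint (Dball n (a i) (r / 4)) (Dball n (a j) (r / 4))) ∧
    ∃ N : ℕ, ∀ z, {k | z ∈ Dball n (a k) (4 * r)}.Finite ∧
      {k | z ∈ Dball n (a k) (4 * r)}.ncard ≤ N

/-- The `k`-th approximation number of a bounded operator (equal to the `k`-th
singular value for compact operators between Hilbert spaces). -/
def approxNum {H K : Type*} [NormedAddCommGroup H] [NormedSpace ℂ H]
    [NormedAddCommGroup K] [NormedSpace ℂ K] (T : H →L[ℂ] K) (k : ℕ) : ℝ :=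
  sInf ((fun F : H →L[ℂ] K => ‖T - F‖) ''
    {F | Module.rank ℂ (LinearMap.range (F : H →ₗ[ℂ] K)) ≤ (k : Cardinal)})

/-- Membership in the Schatten ideal `S_p`. -/
def MemSchatten {H K : Type*} [NormedAddCommGroup H] [NormedSpace ℂ H]
    [NormedAddCommGroup K] [NormedSpace ℂ K] (p : ℝ) (T : H →L[ℂ] K) : Prop :=
  Summable fun k => approxNum T k ^ p

/-- The Schatten `p`-norm. -/
def schattenNorm {H K : Type*} [NormedAddCommGroup H] [NormedSpace ℂ H]
    [NormedAddCommGroup K] [NormedSpace ℂ K] (p : ℝ) (T : H →L[ℂ] K) : ℝ :=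
  (∑' k, approxNum T k ^ p) ^ (1 / p)

/-- The weighted Lebesgue space `L^2_α = L^2(𝔹_n, dv_α)`. -/
abbrev Lsp (α : ℝ) := MeasureTheory.Lp ℂ 2 (nuA n α)

end


/-!
With `ρ = |φ_z w| = tanh β(z, w)`, Rudin's identity `|1 - ⟨z, w⟩|² (1 - ρ²) = (1 - |z|²)(1 - |w|²)`
reads `|1 - ⟨z, w⟩| = √(1 - |z|²) √(1 - |w|²) cosh β(z, w)`, and
`1 - ⟨z, φ_z w⟩ = (1 - |z|²) / (1 - ⟨z, w⟩)` gives `√(1 - |w|²) ≤ √(1 - |z|²) e^{β(z, w)}`.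
For `u` on the geodesic `β(z, u) + β(a, u) = β(z, a)`, hence
`|1 - ⟨u, a⟩| ≤ √(1 - |a|²) √(1 - |z|²) e^{β(z, u)} cosh β(a, u)
  ≤ 2 √(1 - |a|²) √(1 - |z|²) cosh β(z, a) = 2 |1 - ⟨z, a⟩|`.
-/

open scoped ComplexInnerProductSpace

section

variable {n : ℕ}

noncomputable def mobiusNum (z w : EuclideanSpace ℂ (Fin n)) : EuclideanSpace ℂ (Fin n) :=
  z - projLine n z w - (Real.sqrt (1 - ‖z‖ ^ 2) : ℂ) • (w - projLine n z w)

theorem mobius_eq_smul (z w : EuclideanSpace ℂ (Fin n)) :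
    mobius n z w = ((1 : ℂ) - ⟪z, w⟫)⁻¹ • mobiusNum z w := rfl

theorem projLine_eq (z w : EuclideanSpace ℂ (Fin n)) :
    projLine n z w = (⟪z, w⟫ / ⟪z, z⟫) • z := by
  rcases eq_or_ne z 0 with rfl | hz
  · simp [projLine]
  · simp [projLine, hz, hip]

theorem inner_self_eq_ofReal (z : EuclideanSpace ℂ (Fin n)) :
    ⟪z, z⟫ = ((‖z‖ ^ 2 : ℝ) : ℂ) := by
  exact_mod_cast inner_self_eq_norm_sq_to_K z

theorem inner_mobiusNum_right (z w : EuclideanSpace ℂ (Fin n)) :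
    ⟪z, mobiusNum z w⟫ = ((‖z‖ ^ 2 : ℝ) : ℂ) - ⟪z, w⟫ := by
  rcases eq_or_ne z 0 with rfl | hz
  · simp
  have hZ : ((‖z‖ ^ 2 : ℝ) : ℂ) ≠ 0 := by exact_mod_cast pow_ne_zero 2 (norm_ne_zero_iff.mpr hz)
  simp only [mobiusNum, projLine_eq, inner_sub_right, inner_smul_right, inner_self_eq_ofReal]
  field_simp
  ring

theorem norm_mobiusNum_sq {z : EuclideanSpace ℂ (Fin n)} (hz : ‖z‖ ≤ 1)
    (w : EuclideanSpace ℂ (Fin n)) :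
    ‖mobiusNum z w‖ ^ 2 = ‖1 - ⟪z, w⟫‖ ^ 2 - (1 - ‖z‖ ^ 2) * (1 - ‖w‖ ^ 2) := by
  rcases eq_or_ne z 0 with rfl | hz0
  · simp [mobiusNum, projLine]
  have hZ : ((‖z‖ : ℝ) : ℂ) ≠ 0 := by exact_mod_cast norm_ne_zero_iff.mpr hz0
  have hs : ((Real.sqrt (1 - ‖z‖ ^ 2) : ℝ) : ℂ) ^ 2 = 1 - ((‖z‖ ^ 2 : ℝ) : ℂ) := by
    exact_mod_cast Real.sq_sqrt (by nlinarith [norm_nonneg z])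
  apply Complex.ofReal_injective
  rw [← inner_self_eq_ofReal]
  push_cast
  rw [← Complex.mul_conj', map_sub, map_one, inner_conj_symm]
  simp only [mobiusNum, projLine_eq, inner_sub_left, inner_sub_right, inner_smul_left,
    inner_smul_right, inner_self_eq_ofReal, inner_conj_symm, map_div₀, Complex.conj_ofReal]
  generalize ⟪z, w⟫ = q
  generalize ⟪w, z⟫ = q'
  generalize ((Real.sqrt (1 - ‖z‖ ^ 2) : ℝ) : ℂ) = s at hs ⊢
  push_cast at hs ⊢
  generalize ((‖z‖ : ℝ) : ℂ) = Z at hZ hs ⊢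
  generalize ((‖w‖ : ℝ) : ℂ) = W
  field_simp
  linear_combination (W ^ 2 * Z ^ 2 - q * q') * hs

theorem one_sub_inner_ne_zero {z w : EuclideanSpace ℂ (Fin n)} (hz : ‖z‖ < 1) (hw : ‖w‖ < 1) :
    (1 : ℂ) - ⟪z, w⟫ ≠ 0 := by
  have : ‖⟪z, w⟫‖ < 1 :=
    (norm_inner_le_norm z w).trans_lt (by nlinarith [norm_nonneg z, norm_nonneg w])
  intro h
  rw [← sub_eq_zero.mp h, norm_one] at this
  exact this.false

theorem norm_one_sub_inner_comm (z w : EuclideanSpace ℂ (Fin n)) :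
    ‖(1 : ℂ) - ⟪w, z⟫‖ = ‖(1 : ℂ) - ⟪z, w⟫‖ := by
  rw [← inner_conj_symm, ← RCLike.norm_conj, map_sub, map_one, RCLike.conj_conj]

theorem norm_one_sub_inner_sq_mul_one_sub_norm_mobius_sq {z w : EuclideanSpace ℂ (Fin n)}
    (hz : ‖z‖ < 1) (hw : ‖w‖ < 1) :
    ‖(1 : ℂ) - ⟪z, w⟫‖ ^ 2 * (1 - ‖mobius n z w‖ ^ 2) = (1 - ‖z‖ ^ 2) * (1 - ‖w‖ ^ 2) := by
  have hq : ‖(1 : ℂ) - ⟪z, w⟫‖ ≠ 0 := norm_ne_zero_iff.mpr (one_sub_inner_ne_zero hz hw)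
  rw [mobius_eq_smul, norm_smul, norm_inv]
  field_simp
  linarith [norm_mobiusNum_sq hz.le w]

theorem one_sub_inner_mobius {z w : EuclideanSpace ℂ (Fin n)} (hz : ‖z‖ < 1) (hw : ‖w‖ < 1) :
    (1 : ℂ) - ⟪z, mobius n z w⟫ = ((1 - ‖z‖ ^ 2 : ℝ) : ℂ) / (1 - ⟪z, w⟫) := by
  have hq := one_sub_inner_ne_zero hz hw
  rw [mobius_eq_smul, inner_smul_right, inner_mobiusNum_right]
  field_simp
  push_cast
  ring

theorem norm_mobius_lt_one {z w : EuclideanSpace ℂ (Fin n)} (hz : ‖z‖ < 1) (hw : ‖w‖ < 1) :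
    ‖mobius n z w‖ < 1 := by
  have h := norm_one_sub_inner_sq_mul_one_sub_norm_mobius_sq hz hw
  have hq : 0 < ‖(1 : ℂ) - ⟪z, w⟫‖ := norm_pos_iff.mpr (one_sub_inner_ne_zero hz hw)
  have hR : 0 < (1 - ‖z‖ ^ 2) * (1 - ‖w‖ ^ 2) :=
    mul_pos (by nlinarith [norm_nonneg z]) (by nlinarith [norm_nonneg w])
  have : 0 < 1 - ‖mobius n z w‖ ^ 2 := pos_of_mul_pos_right (h ▸ hR) (by positivity)
  nlinarith [norm_nonneg (mobius n z w)]

/-- `|1 - ⟨z, φ_z w⟩| ≥ 1 - |φ_z w|` turns `one_sub_inner_mobius` into this bound. -/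
theorem one_sub_norm_mobius_mul_le {z w : EuclideanSpace ℂ (Fin n)} (hz : ‖z‖ < 1)
    (hw : ‖w‖ < 1) :
    (1 - ‖mobius n z w‖) * ‖(1 : ℂ) - ⟪z, w⟫‖ ≤ 1 - ‖z‖ ^ 2 := by
  have hq : 0 < ‖(1 : ℂ) - ⟪z, w⟫‖ := norm_pos_iff.mpr (one_sub_inner_ne_zero hz hw)
  have hnorm : ‖(1 : ℂ) - ⟪z, mobius n z w⟫‖ * ‖(1 : ℂ) - ⟪z, w⟫‖ = 1 - ‖z‖ ^ 2 := by
    rw [one_sub_inner_mobius hz hw, norm_div, Complex.norm_real, Real.norm_eq_abs,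
      abs_of_nonneg (by nlinarith [norm_nonneg z]), div_mul_cancel₀ _ hq.ne']
  have hlow : 1 - ‖mobius n z w‖ ≤ ‖(1 : ℂ) - ⟪z, mobius n z w⟫‖ := by
    have h1 := norm_inner_le_norm (𝕜 := ℂ) z (mobius n z w)
    have h2 := norm_sub_norm_le (1 : ℂ) ⟪z, mobius n z w⟫
    rw [norm_one] at h2
    nlinarith [norm_nonneg (mobius n z w), norm_nonneg z]
  calc (1 - ‖mobius n z w‖) * ‖(1 : ℂ) - ⟪z, w⟫‖
      ≤ ‖(1 : ℂ) - ⟪z, mobius n z w⟫‖ * ‖(1 : ℂ) - ⟪z, w⟫‖ := by gcongr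
    _ = 1 - ‖z‖ ^ 2 := hnorm

theorem bdist_eq_artanh {z w : EuclideanSpace ℂ (Fin n)} (hz : ‖z‖ < 1) (hw : ‖w‖ < 1) :
    bdist n z w = Real.artanh ‖mobius n z w‖ := by
  rw [bdist, Real.artanh_eq_half_log]
  exact ⟨by linarith [norm_nonneg (mobius n z w)], (norm_mobius_lt_one hz hw).le⟩

theorem bdist_nonneg {z w : EuclideanSpace ℂ (Fin n)} (hz : ‖z‖ < 1) (hw : ‖w‖ < 1) :
    0 ≤ bdist n z w := by
  rw [bdist_eq_artanh hz hw]
  exact Real.artanh_nonneg (norm_nonneg _)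

theorem norm_mobius_mem_Ioo {z w : EuclideanSpace ℂ (Fin n)} (hz : ‖z‖ < 1) (hw : ‖w‖ < 1) :
    ‖mobius n z w‖ ∈ Set.Ioo (-1) 1 :=
  ⟨by linarith [norm_nonneg (mobius n z w)], norm_mobius_lt_one hz hw⟩

theorem norm_one_sub_inner_eq_mul_cosh_bdist {z w : EuclideanSpace ℂ (Fin n)} (hz : ‖z‖ < 1)
    (hw : ‖w‖ < 1) :
    ‖(1 : ℂ) - ⟪z, w⟫‖ = √(1 - ‖z‖ ^ 2) * √(1 - ‖w‖ ^ 2) * Real.cosh (bdist n z w) := by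
  have hρ := norm_mobius_mem_Ioo hz hw
  have hρ2 : 0 < 1 - ‖mobius n z w‖ ^ 2 := by nlinarith [hρ.1, hρ.2]
  rw [bdist_eq_artanh hz hw, Real.cosh_artanh hρ, mul_one_div,
    eq_div_iff (Real.sqrt_pos.mpr hρ2).ne', ← Real.sqrt_mul (by nlinarith [norm_nonneg z]),
    ← norm_one_sub_inner_sq_mul_one_sub_norm_mobius_sq hz hw,
    Real.sqrt_mul (sq_nonneg _), Real.sqrt_sq (norm_nonneg _)]

theorem sqrt_one_sub_norm_sq_le_mul_exp_bdist {z w : EuclideanSpace ℂ (Fin n)} (hz : ‖z‖ < 1)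
    (hw : ‖w‖ < 1) :
    √(1 - ‖w‖ ^ 2) ≤ √(1 - ‖z‖ ^ 2) * Real.exp (bdist n z w) := by
  have hρ := norm_mobius_mem_Ioo hz hw
  set ρ := ‖mobius n z w‖
  set M := ‖(1 : ℂ) - ⟪z, w⟫‖
  have hZ : 0 < 1 - ‖z‖ ^ 2 := by nlinarith [norm_nonneg z]
  have hρ1 : 0 < 1 - ρ := by linarith [hρ.2]
  have hid := norm_one_sub_inner_sq_mul_one_sub_norm_mobius_sq hz hw
  have hkey := one_sub_norm_mobius_mul_le hz hw
  have hM : ((1 - ρ) * M) ^ 2 ≤ (1 - ‖z‖ ^ 2) ^ 2 :=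
    pow_le_pow_left₀ (mul_nonneg hρ1.le (norm_nonneg _)) hkey 2
  have hW : 1 - ‖w‖ ^ 2 ≤ (1 - ‖z‖ ^ 2) * ((1 + ρ) / (1 - ρ)) := by
    rw [mul_div_assoc', le_div_iff₀ hρ1]
    refine le_of_mul_le_mul_left ?_ hZ
    nlinarith [hρ.1]
  rw [bdist_eq_artanh hz hw, Real.exp_artanh hρ, ← Real.sqrt_mul hZ.le]
  exact Real.sqrt_le_sqrt hW

theorem exp_mul_cosh_le_two_mul_cosh_add (x : ℝ) {y : ℝ} (hy : 0 ≤ y) :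
    Real.exp x * Real.cosh y ≤ 2 * Real.cosh (x + y) := by
  rw [Real.cosh_eq, Real.cosh_eq]
  have h1 : Real.exp (x - y) ≤ Real.exp (x + y) := Real.exp_le_exp.mpr (by linarith)
  have h2 := Real.exp_pos (-(x + y))
  calc Real.exp x * ((Real.exp y + Real.exp (-y)) / 2)
      = (Real.exp (x + y) + Real.exp (x - y)) / 2 := by
        rw [Real.exp_add, sub_eq_add_neg, Real.exp_add]; ring
    _ ≤ 2 * ((Real.exp (x + y) + Real.exp (-(x + y))) / 2) := by linarith

theorem norm_one_sub_inner_le_two_mul_of_bdist_add_eq {z a u : EuclideanSpace ℂ (Fin n)}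
    (hz : ‖z‖ < 1) (ha : ‖a‖ < 1) (hu : ‖u‖ < 1)
    (h : bdist n z u + bdist n a u = bdist n z a) :
    ‖(1 : ℂ) - ⟪u, a⟫‖ ≤ 2 * ‖(1 : ℂ) - ⟪z, a⟫‖ := by
  calc ‖(1 : ℂ) - ⟪u, a⟫‖
      = √(1 - ‖a‖ ^ 2) * √(1 - ‖u‖ ^ 2) * Real.cosh (bdist n a u) := by
        rw [norm_one_sub_inner_comm, norm_one_sub_inner_eq_mul_cosh_bdist ha hu]
    _ ≤ √(1 - ‖a‖ ^ 2) * (√(1 - ‖z‖ ^ 2) * Real.exp (bdist n z u)) * Real.cosh (bdist n a u) := by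
        gcongr
        exact sqrt_one_sub_norm_sq_le_mul_exp_bdist hz hu
    _ = √(1 - ‖a‖ ^ 2) * √(1 - ‖z‖ ^ 2) * (Real.exp (bdist n z u) * Real.cosh (bdist n a u)) := by
        ring
    _ ≤ √(1 - ‖a‖ ^ 2) * √(1 - ‖z‖ ^ 2) * (2 * Real.cosh (bdist n z a)) := by
        rw [← h]
        exact mul_le_mul_of_nonneg_left
          (exp_mul_cosh_le_two_mul_cosh_add _ (bdist_nonneg ha hu)) (by positivity)
    _ = 2 * ‖(1 : ℂ) - ⟪z, a⟫‖ := by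
        rw [norm_one_sub_inner_eq_mul_cosh_bdist hz ha]; ring

theorem mem_Ball_iff {z : EuclideanSpace ℂ (Fin n)} : z ∈ Ball n ↔ ‖z‖ < 1 := mem_ball_zero_iff

end

/-- along the Bergman geodesic from `z` to `a` one has
`|1 - ⟨a, γ(t)⟩| ≤ 2 |1 - ⟨a, z⟩|`. -/
theorem stmt4 (n : ℕ) (z a : EuclideanSpace ℂ (Fin n)) (hz : z ∈ Ball n) (ha : a ∈ Ball n)
    (γ : ℝ → EuclideanSpace ℂ (Fin n)) (hγ0 : γ 0 = z) (hγ1 : γ 1 = a)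
    (hmem : ∀ t ∈ Set.Icc (0 : ℝ) 1, γ t ∈ Ball n)
    (hgeo : ∀ s ∈ Set.Icc (0 : ℝ) 1, ∀ t ∈ Set.Icc (0 : ℝ) 1,
      bdist n (γ s) (γ t) = |s - t| * bdist n z a) :
    ∀ t ∈ Set.Icc (0 : ℝ) 1,
      ‖(1 : ℂ) - hip n a (γ t)‖ ≤ 2 * ‖(1 : ℂ) - hip n a z‖ := by
  intro t ht
  refine norm_one_sub_inner_le_two_mul_of_bdist_add_eq (mem_Ball_iff.mp hz) (mem_Ball_iff.mp ha)
    (mem_Ball_iff.mp (hmem t ht)) ?_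
  have h0 := hgeo 0 ⟨le_rfl, zero_le_one⟩ t ht
  have h1 := hgeo 1 ⟨zero_le_one, le_rfl⟩ t ht
  rw [hγ0] at h0
  rw [hγ1] at h1
  rw [h0, h1, abs_of_nonpos (by linarith [ht.1]), abs_of_nonneg (by linarith [ht.2])]
  ring
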